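/- Let φ: g → Der(h) be an action of a Lie algebra (g,[·,·]_g) on a Lie algebra (h,[·,·]_h), λ ∈ K, and equip L := ⊕_{n≥0} Hom(Λⁿh, g) with the differential graded Lie algebra structure (⟦·,·⟧, d) associated to φ and λ. Then a linear map T: h → g is a relative Rota–Baxter operator of weight λ (i.e., [Tu, Tv]_g = T(φ(Tu)v − φ(Tv)u + λ[u,v]_h) for all u,v ∈ h) if and only if T is a Maurer–Cartan element of this differential graded Lie algebra, i.e., dT + (1/2)⟦T, T⟧ = 0. -/

import Mathlib

open BigOperators

namespace RBPaper

/-- A permutation of `Fin n` is an `(i, n-i)`-shuffle if it is strictly increasing on the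
first `i` indices and on the last `n - i` indices. -/
def IsShuffle {n : ℕ} (i : ℕ) (σ : Equiv.Perm (Fin n)) : Prop :=
  (∀ a b : Fin n, a < b → (b : ℕ) < i → σ a < σ b) ∧
  (∀ a b : Fin n, a < b → i ≤ (a : ℕ) → σ a < σ b)

/-- `(a, b, n-a-b)`-shuffles. -/
def IsShuffle3 {n : ℕ} (a b : ℕ) (σ : Equiv.Perm (Fin n)) : Prop :=
  (∀ p q : Fin n, p < q → (q : ℕ) < a → σ p < σ q) ∧
  (∀ p q : Fin n, p < q → a ≤ (p : ℕ) → (q : ℕ) < a + b → σ p < σ q) ∧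
  (∀ p q : Fin n, p < q → a + b ≤ (p : ℕ) → σ p < σ q)

/-- The finite set of `(i, n-i)`-shuffles. -/
noncomputable def shuffles (i n : ℕ) : Finset (Equiv.Perm (Fin n)) :=
  letI := Classical.decPred fun σ : Equiv.Perm (Fin n) => IsShuffle i σ
  Finset.univ.filter fun σ => IsShuffle i σ

/-- The finite set of `(a, b, n-a-b)`-shuffles. -/
noncomputable def shuffles3 (a b n : ℕ) : Finset (Equiv.Perm (Fin n)) :=
  letI := Classical.decPred fun σ : Equiv.Perm (Fin n) => IsShuffle3 a b σ
  Finset.univ.filter fun σ => IsShuffle3 a b σ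

section NR

variable {W : Type*} [AddCommGroup W]

/-- The composition `P ∘̄ Q` entering the Nijenhuis-Richardson bracket. -/
noncomputable def nrComp (p q : ℕ) (P : (Fin (p + 1) → W) → W) (Q : (Fin (q + 1) → W) → W) :
    (Fin (p + q + 1) → W) → W := fun x =>
  ∑ σ ∈ shuffles (q + 1) (p + q + 1),
    ((Equiv.Perm.sign σ : ℤ)) •
      P (Fin.cons (Q fun i => x (σ (Fin.castLE (by omega : q + 1 ≤ p + q + 1) i)))
        fun i => x (σ (Fin.cast (by omega : q + 1 + p = p + q + 1) (Fin.natAdd (q + 1) i))))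

/-- The Nijenhuis-Richardson bracket `[P, Q]_NR = P ∘̄ Q - (-1)^{pq} Q ∘̄ P`. -/
noncomputable def nrBracket (p q : ℕ) (P : (Fin (p + 1) → W) → W) (Q : (Fin (q + 1) → W) → W) :
    (Fin (p + q + 1) → W) → W := fun x =>
  nrComp p q P Q x -
    ((-1 : ℤ) ^ (p * q)) •
      nrComp q p Q P fun i => x (Fin.cast (by omega : q + p + 1 = p + q + 1) i)

end NR

section Lift

variable {g V : Type*} [AddCommGroup g] [AddCommGroup V]

/-- The lift of a map `f : Λᵏ g ⊗ Λˡ V → g` to a cochain on `g ⊕ V`. -/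
noncomputable def liftG (k l : ℕ) (f : (Fin k → g) → (Fin l → V) → g) :
    (Fin (k + l) → g × V) → g × V := fun z =>
  (∑ τ ∈ shuffles k (k + l),
      ((Equiv.Perm.sign τ : ℤ)) •
        f (fun i => (z (τ (Fin.castAdd l i))).1) fun j => (z (τ (Fin.natAdd k j))).2, 0)

/-- The lift of a map `f : Λᵏ g ⊗ Λˡ V → V` to a cochain on `g ⊕ V`. -/
noncomputable def liftV (k l : ℕ) (f : (Fin k → g) → (Fin l → V) → V) :
    (Fin (k + l) → g × V) → g × V := fun z =>
  (0, ∑ τ ∈ shuffles k (k + l),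
      ((Equiv.Perm.sign τ : ℤ)) •
        f (fun i => (z (τ (Fin.castAdd l i))).1) fun j => (z (τ (Fin.natAdd k j))).2)

end Lift

section Bidegree

variable {g V : Type*} [Zero g] [Zero V]

/-- A cochain on `g ⊕ V` with `m` inputs has bidegree `k | l` (where `m = k + l + 1`) if on
pure tuples with `k+1` entries from `g` it takes values in `g`, on pure tuples with `k`
entries from `g` (and `l+1` from `V`) it takes values in `V`, and it vanishes on all other
pure tuples. -/
def HasBidegree (k l : ℤ) (m : ℕ) (f : (Fin m → g × V) → g × V) : Prop :=
  ∀ (z : Fin m → g × V) (S : Finset (Fin m)),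
    (∀ i ∈ S, (z i).2 = 0) → (∀ i ∉ S, (z i).1 = 0) →
      (((S.card : ℤ) = k + 1 → (f z).2 = 0) ∧
        ((S.card : ℤ) = k → (f z).1 = 0) ∧
        ((S.card : ℤ) ≠ k + 1 → (S.card : ℤ) ≠ k → f z = 0))

end Bidegree

section Ops

variable {K : Type*} [Field K] [CharZero K]
variable {g V : Type*} [AddCommGroup g] [Module K g] [AddCommGroup V] [Module K V]

/-- The lift `π = μ̂ + ρ̂` of a pair consisting of a bilinear skew bracket `μ` on `g` and a
bilinear map `ρ : g ⊗ V → V`. -/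
noncomputable def pihat (μ : AlternatingMap K g g (Fin 2)) (ρ : g →ₗ[K] V →ₗ[K] V) :
    (Fin 2 → g × V) → g × V := fun z =>
  liftG 2 0 (fun x _ => μ x) z + liftV 1 1 (fun x v => ρ (x 0) (v 0)) z

/-- The lift `T̂` of a linear map `T : V → g`. -/
noncomputable def Tha (T : V →ₗ[K] g) : (Fin 1 → g × V) → g × V :=
  liftG 0 1 fun _ v => T (v 0)

/-- Iterated Nijenhuis-Richardson bracket `[⋯[[F, T̂], T̂], ⋯, T̂]` with `n` copies of `T̂`. -/
noncomputable def adTiter (T : V →ₗ[K] g) (p : ℕ) :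
    ℕ → ((Fin (p + 1) → g × V) → g × V) → (Fin (p + 1) → g × V) → g × V
  | 0, F => F
  | n + 1, F => nrBracket p 0 (adTiter T p n F) (Tha T)

/-- `μ` satisfies the Jacobi identity, i.e. defines a Lie algebra structure on `g`. -/
def IsJacobi (μ : AlternatingMap K g g (Fin 2)) : Prop :=
  ∀ x y z : g, μ ![μ ![x, y], z] + μ ![μ ![y, z], x] + μ ![μ ![z, x], y] = 0

/-- `ρ` is a representation of the Lie algebra `(g, μ)` on `V`. -/
def IsRep (μ : AlternatingMap K g g (Fin 2)) (ρ : g →ₗ[K] V →ₗ[K] V) : Prop :=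
  ∀ (x y : g) (v : V), ρ (μ ![x, y]) v = ρ x (ρ y v) - ρ y (ρ x v)

/-- `T : V → g` is a relative Rota-Baxter operator, so `((g, μ), ρ, T)` is a relative
Rota-Baxter Lie algebra. -/
def IsRelRB (μ : AlternatingMap K g g (Fin 2)) (ρ : g →ₗ[K] V →ₗ[K] V) (T : V →ₗ[K] g) : Prop :=
  ∀ u v : V, μ ![T u, T v] = T (ρ (T u) v - ρ (T v) u)

/-- The coboundary `∂ f = (-1)^{n-1} [π, f̂]_NR` of the Lie-Rep pair `(g, μ; ρ)`, acting on a
(lifted) `n`-cochain with `n = m + 1` inputs. -/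
noncomputable def Dpartial (μ : AlternatingMap K g g (Fin 2)) (ρ : g →ₗ[K] V →ₗ[K] V)
    (m : ℕ) (F : (Fin (m + 1) → g × V) → g × V) : (Fin (m + 2) → g × V) → g × V := fun z =>
  ((-1 : ℤ) ^ m) •
    nrBracket 1 m (pihat μ ρ) F fun i => z (Fin.cast (by omega : 1 + m + 1 = m + 2) i)

/-- The coboundary `δ θ = (-1)^n [[π, T̂]_NR, θ̂]_NR` of the relative Rota-Baxter operator `T`,
acting on a (lifted) `n`-cochain `θ ∈ Hom(Λ^{n-1} V, g)` with `n - 1 = m + 1` inputs. -/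
noncomputable def Ddelta (μ : AlternatingMap K g g (Fin 2)) (ρ : g →ₗ[K] V →ₗ[K] V)
    (T : V →ₗ[K] g) (m : ℕ) (Θ : (Fin (m + 1) → g × V) → g × V) :
    (Fin (m + 2) → g × V) → g × V := fun z =>
  ((-1 : ℤ) ^ (m + 2)) •
    nrBracket 1 m (nrBracket 1 0 (pihat μ ρ) (Tha T)) Θ
      fun i => z (Fin.cast (by omega : 1 + m + 1 = m + 2) i)

/-- The operator `h_T f = (-1)^{n-2} (1/n!) [⋯[[f̂, T̂], T̂], ⋯, T̂]` (with `n` copies of `T̂`),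
acting on a (lifted) `n`-cochain with `n = m + 1` inputs. -/
noncomputable def hTop (T : V →ₗ[K] g) (m : ℕ) (F : (Fin (m + 1) → g × V) → g × V) :
    (Fin (m + 1) → g × V) → g × V := fun z =>
  (((-1 : K) ^ (m + 1)) / ((m + 1).factorial : K)) • adTiter T m (m + 1) F z

/-- The lift `f̂ = f̂_g + f̂_V` of a pair `(f_g, f_V) ∈ Hom(Λ^{m+1} g, g) ⊕ Hom(Λ^m g ⊗ V, V)`. -/
noncomputable def cochainLift (m : ℕ) (fg : (Fin (m + 1) → g) → g) (fV : (Fin m → g) → V → V) :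
    (Fin (m + 1) → g × V) → g × V := fun z =>
  liftG (m + 1) 0 (fun x _ => fg x) z + liftV m 1 (fun x v => fV x (v 0)) z

/-- The lift `θ̂` of `θ ∈ Hom(Λ^{m+1} V, g)`. -/
noncomputable def opLift (m : ℕ) (θ : (Fin (m + 1) → V) → g) : (Fin (m + 1) → g × V) → g × V :=
  fun z =>
    liftG 0 (m + 1) (fun _ v => θ v) fun i => z (Fin.cast (by omega : 0 + (m + 1) = m + 1) i)

/-- The Chevalley-Eilenberg coboundary `d_CE f = (-1)^{n-1} [μ, f]_NR` on `Hom(Λ^{m+1} g, g)`. -/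
noncomputable def dCE {h : Type*} [AddCommGroup h] (mu : (Fin 2 → h) → h) (m : ℕ)
    (f : (Fin (m + 1) → h) → h) : (Fin (m + 2) → h) → h := fun x =>
  ((-1 : ℤ) ^ m) • nrBracket 1 m mu f fun i => x (Fin.cast (by omega : 1 + m + 1 = m + 2) i)

/-- The operator `Ω` of a Rota-Baxter operator. -/
noncomputable def OmegaOp {h : Type*} [AddCommGroup h] (T : h → h) (n : ℕ)
    (f : (Fin n → h) → h) : (Fin n → h) → h := fun x =>
  ((-1 : ℤ) ^ n) •
    (f (fun i => T (x i)) - ∑ i : Fin n, T (f (Function.update (fun j => T (x j)) i (x i))))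

/-- The coboundary of the relative Rota-Baxter operator `T`, written on plain (unlifted)
cochains `Hom(Λ^{m+1} V, g) → Hom(Λ^{m+2} V, g)`. -/
noncomputable def deltaUn (μ : AlternatingMap K g g (Fin 2)) (ρ : g →ₗ[K] V →ₗ[K] V)
    (T : V →ₗ[K] g) (m : ℕ) (θ : (Fin (m + 1) → V) → g) : (Fin (m + 2) → V) → g := fun v =>
  (Ddelta μ ρ T m (opLift m θ) fun i => ((0 : g), v i)).1

end Ops


section Weight

variable {K : Type*} [Field K] [CharZero K]
variable {gL : Type*} [LieRing gL] [LieAlgebra K gL]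
variable {hL : Type*} [LieRing hL] [LieAlgebra K hL]

/-- The differential `d` of weight `λ` on `⊕ₙ Hom(Λⁿ h, g)`:
`(dG)(v₁,…,v_{n+1}) = Σ_{i<j} (-1)^{n+i+j-1} G(λ[vᵢ, vⱼ]_h, v₁,…,v̂ᵢ,…,v̂ⱼ,…,v_{n+1})`
(indices `i, j` being 1-based in the displayed formula). -/
noncomputable def dW (lam : K) (n : ℕ) (G : (Fin n → hL) → gL) : (Fin (n + 1) → hL) → gL :=
  fun v =>
    ∑ p : Fin (n + 1) × Fin (n + 1),
      if hij : (p.1 : ℕ) < (p.2 : ℕ) then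
        ((-1 : ℤ) ^ (n + (p.1 : ℕ) + (p.2 : ℕ) + 1)) •
          G (fun k =>
            (Fin.cons (lam • ⁅v p.1, v p.2⁆)
              (fun t : Fin (n - 1) =>
                v (p.2.succAbove
                    (Fin.cast (by have := p.2.isLt; omega : n - 1 + 1 = n)
                      ((Fin.cast (by have := p.2.isLt; omega : n = n - 1 + 1)
                          (Fin.castLT p.1 (by have := p.2.isLt; omega))).succAbove t)))) :
              Fin (n - 1 + 1) → hL)
              (Fin.cast (by have := p.2.isLt; omega : n = n - 1 + 1) k))
      else 0

/-- The graded Lie bracket `⟦g₁, g₂⟧` on `⊕ₙ Hom(Λⁿ h, g)` associated to an action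
`φ : g → Der(h)`. -/
noncomputable def bracketW (φ : gL →ₗ⁅K⁆ LieDerivation K hL hL) (n m : ℕ)
    (g₁ : (Fin n → hL) → gL) (g₂ : (Fin m → hL) → gL) : (Fin (n + m) → hL) → gL := fun v =>
  (if hn : 1 ≤ n then
      ∑ σ ∈ shuffles3 m 1 (n + m),
        (-((Equiv.Perm.sign σ : ℤ))) •
          g₁ (fun k =>
            (Fin.cons
              (φ (g₂ fun i => v (σ (Fin.castLE (by omega : m ≤ n + m) i)))
                (v (σ ⟨m, by omega⟩)))
              (fun t : Fin (n - 1) => v (σ ⟨m + 1 + (t : ℕ), by have := t.isLt; omega⟩)) :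
              Fin (n - 1 + 1) → hL)
              (Fin.cast (by omega : n = n - 1 + 1) k))
    else 0) +
  (if hm : 1 ≤ m then
      ∑ σ ∈ shuffles3 n 1 (n + m),
        (((-1 : ℤ) ^ (m * n)) * ((Equiv.Perm.sign σ : ℤ))) •
          g₂ (fun k =>
            (Fin.cons
              (φ (g₁ fun i => v (σ (Fin.castLE (by omega : n ≤ n + m) i)))
                (v (σ ⟨n, by omega⟩)))
              (fun t : Fin (m - 1) => v (σ ⟨n + 1 + (t : ℕ), by have := t.isLt; omega⟩)) :
              Fin (m - 1 + 1) → hL)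
              (Fin.cast (by omega : m = m - 1 + 1) k))
    else 0) +
  ∑ σ ∈ shuffles n (n + m),
    (-(((-1 : ℤ) ^ (m * n)) * ((Equiv.Perm.sign σ : ℤ)))) •
      ⁅g₁ fun i => v (σ (Fin.castAdd m i)), g₂ fun j => v (σ (Fin.natAdd n j))⁆

end Weight

/-!
In degree one every shuffle set occurring in `⟦·,·⟧` is the whole of `Perm (Fin 2)`,
so `(dT + ½⟦T, T⟧)(u, v)` can be computed outright: `⟦T, T⟧` produces each of the terms
`[Tu, Tv]`, `-T(φ(Tu)v)`, `T(φ(Tv)u)` twice, and the result is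
`[Tu, Tv] - T(φ(Tu)v - φ(Tv)u + λ[u, v])`, the defect of the Rota-Baxter identity.
-/

section MaurerCartan

variable {K : Type*} [Field K]
variable {gL : Type*} [LieRing gL] [LieAlgebra K gL]
variable {hL : Type*} [LieRing hL] [LieAlgebra K hL]

lemma shuffles_one_two : shuffles 1 2 = Finset.univ := by
  classical
  refine Finset.eq_univ_of_forall fun σ => Finset.mem_filter.mpr ⟨Finset.mem_univ σ, ?_, ?_⟩
  all_goals intros; omega

lemma shuffles3_one_one_two : shuffles3 1 1 2 = Finset.univ := by
  classical
  refine Finset.eq_univ_of_forall fun σ => Finset.mem_filter.mpr ⟨Finset.mem_univ σ, ?_, ?_, ?_⟩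
  all_goals intros; omega

lemma univ_perm_fin_two :
    (Finset.univ : Finset (Equiv.Perm (Fin 2))) = {1, Equiv.swap 0 1} := by
  decide

lemma sum_perm_fin_two {M : Type*} [AddCommMonoid M] (f : Equiv.Perm (Fin 2) → M) :
    ∑ σ, f σ = f 1 + f (Equiv.swap 0 1)  := by
  rw [univ_perm_fin_two, Finset.sum_pair (by decide)]

lemma dW_one_apply (lam : K) (T : hL →ₗ[K] gL) (v : Fin 2 → hL) :
    dW lam 1 (fun w : Fin 1 → hL => T (w 0)) v = -T (lam • ⁅v 0, v 1⁆) := by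
  simp [dW, Fintype.sum_prod_type, Fin.sum_univ_two]

lemma bracketW_one_one_apply (φ : gL →ₗ⁅K⁆ LieDerivation K hL hL) (T : hL →ₗ[K] gL)
    (v : Fin 2 → hL) :
    bracketW φ 1 1 (fun w : Fin 1 → hL => T (w 0)) (fun w : Fin 1 → hL => T (w 0)) v =
      (2 : K) • (⁅T (v 0), T (v 1)⁆ - T (φ (T (v 0)) (v 1) - φ (T (v 1)) (v 0))) := by
  rw [bracketW, shuffles3_one_one_two, shuffles_one_two, dif_pos le_rfl, dif_pos le_rfl,
    sum_perm_fin_two, sum_perm_fin_two, sum_perm_fin_two]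
  simp only [Equiv.Perm.sign_one, Equiv.Perm.sign_swap', Equiv.Perm.coe_one, id_eq,
    Equiv.swap_apply_left, Equiv.swap_apply_right, Fin.castLE, Fin.cons_zero, Fin.cast_eq_self,
    Fin.natAdd_eq_addNat, Fin.addNat_one, Fin.succ_zero_eq_one, Fin.val_eq_zero, Fin.zero_eta,
    Fin.mk_one, Fin.reduceCastAdd, zero_ne_one, ↓reduceIte, Units.val_one, Units.val_neg, mul_one,
    mul_neg, pow_one, one_smul, neg_smul, lie_skew, map_sub, two_smul]
  abel

lemma maurerCartan_one_apply [CharZero K] (φ : gL →ₗ⁅K⁆ LieDerivation K hL hL) (lam : K)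
    (T : hL →ₗ[K] gL) (v : Fin 2 → hL) :
    dW lam 1 (fun w : Fin 1 → hL => T (w 0)) v +
        (2 : K)⁻¹ •
          bracketW φ 1 1 (fun w : Fin 1 → hL => T (w 0)) (fun w : Fin 1 → hL => T (w 0)) v =
      ⁅T (v 0), T (v 1)⁆ - T (φ (T (v 0)) (v 1) - φ (T (v 1)) (v 0) + lam • ⁅v 0, v 1⁆) := by
  rw [dW_one_apply, bracketW_one_one_apply, inv_smul_smul₀ two_ne_zero, map_add]
  abel

end MaurerCartan

/-- A linear map `T : h → g` is a relative Rota-Baxter operator of weight `λ`,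
i.e. `[Tu, Tv]_g = T(φ(Tu)v - φ(Tv)u + λ[u,v]_h)`, if and only if `T` is a Maurer-Cartan
element of the differential graded Lie algebra `(⊕ₙ Hom(Λⁿ h, g), ⟦·,·⟧, d)`:
`dT + (1/2)⟦T, T⟧ = 0`. -/
theorem relRB_weight_iff_maurerCartan
    {K : Type*} [Field K] [CharZero K]
    {gL : Type*} [LieRing gL] [LieAlgebra K gL]
    {hL : Type*} [LieRing hL] [LieAlgebra K hL]
    (φ : gL →ₗ⁅K⁆ LieDerivation K hL hL) (lam : K) (T : hL →ₗ[K] gL) :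
    (∀ u v : hL, ⁅T u, T v⁆ = T (φ (T u) v - φ (T v) u + lam • ⁅u, v⁆)) ↔
      (∀ v : Fin 2 → hL,
        dW lam 1 (fun w : Fin 1 → hL => T (w 0)) v +
            ((2 : K)⁻¹) •
              bracketW φ 1 1 (fun w : Fin 1 → hL => T (w 0)) (fun w : Fin 1 → hL => T (w 0))
                v = 0) := by
  simp_rw [maurerCartan_one_apply, sub_eq_zero]
  exact ⟨fun h v => h (v 0) (v 1), fun h u w => by simpa using h ![u, w]⟩

end RBPaper
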